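/- arXiv:1708.04406 — 3 statements merged into one kernel-verified Lean document; each statement's English description precedes it below -/
import Mathlib

section
/- Let P be the triangular prism, i.e., the cubic graph with vertices a, b, c, a', b', c', triangle edges ab, bc, ca and a'b', b'c', c'a', and matching edges aa', bb', cc'. Let H be the graph obtained from P by subdividing the edge aa' (an edge contained in no triangle) with one new vertex s. Then the square H² of H is the complete graph on the 7 vertices of H; in particular, the chromatic number of H² equals 7. -/
/-- The square of a graph: two distinct vertices are adjacent iff their
distance in `G` is at most 2 (adjacent, or having a common neighbor). -/
def graphSquare {V : Type*} (G : SimpleGraph V) : SimpleGraph V where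
  Adj u v := u ≠ v ∧ (G.Adj u v ∨ ∃ w, G.Adj u w ∧ G.Adj w v)
  symm := ⟨by
    rintro u v ⟨hne, h | ⟨w, h1, h2⟩⟩
    · exact ⟨hne.symm, Or.inl h.symm⟩
    · exact ⟨hne.symm, Or.inr ⟨w, h2.symm, h1.symm⟩⟩⟩
  loopless := ⟨by rintro u ⟨hne, -⟩; exact hne rfl⟩

/-- The edges of the graph `H` obtained from the triangular prism with
vertices `a = 0, b = 1, c = 2, a' = 3, b' = 4, c' = 5` (triangles `a b c`
and `a' b' c'`, matching edges `a a'`, `b b'`, `c c'`) by subdividing the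
edge `a a'` (which lies in no triangle) with a new vertex `s = 6`. -/
def subdividedPrismEdges : List (Fin 7 × Fin 7) :=
  [(0, 1), (1, 2), (2, 0), (3, 4), (4, 5), (5, 3), (1, 4), (2, 5), (0, 6), (6, 3)]

/-- The triangular prism with the edge `a a'` subdivided by the vertex `s = 6`. -/
def subdividedPrism : SimpleGraph (Fin 7) where
  Adj u v := (u, v) ∈ subdividedPrismEdges ∨ (v, u) ∈ subdividedPrismEdges
  symm := ⟨fun _ _ h => h.symm⟩
  loopless := ⟨fun u => by fin_cases u <;> decide⟩

/-! The prism has diameter 2, and each non-adjacent pair of it, such as `a` and `b'`, is joined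
by a triangle edge followed by a matching edge other than `a a'` (here `a b b'`). So after the
subdivision only `a` and `a'` lose their short path, and they meet at `s`; in turn `s` reaches
`b`, `c` through `a` and `b'`, `c'` through `a'`. -/

instance : DecidableRel subdividedPrism.Adj := fun u v =>
  decidable_of_iff ((u, v) ∈ subdividedPrismEdges ∨ (v, u) ∈ subdividedPrismEdges) Iff.rfl

theorem graphSquare_eq_top_iff {V : Type*} (G : SimpleGraph V) :
    graphSquare G = ⊤ ↔ ∀ u v, u ≠ v → G.Adj u v ∨ ∃ w, G.Adj u w ∧ G.Adj w v := by
  simp only [SimpleGraph.ext_iff, funext_iff, graphSquare, SimpleGraph.top_adj, eq_iff_iff,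
    and_iff_left_iff_imp]

theorem graphSquare_subdividedPrism_eq_top : graphSquare subdividedPrism = ⊤ :=
  (graphSquare_eq_top_iff _).2 (by decide)

/-- The square of the subdivided triangular prism is the complete graph on its
7 vertices; in particular its chromatic number equals 7. -/
theorem square_subdividedPrism_eq_top_and_chromaticNumber :
    graphSquare subdividedPrism = ⊤ ∧
      (graphSquare subdividedPrism).chromaticNumber = 7 := by
  refine ⟨graphSquare_subdividedPrism_eq_top, ?_⟩
  rw [graphSquare_subdividedPrism_eq_top, SimpleGraph.chromaticNumber_top, Fintype.card_fin]
  rfl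
end

section
/- Let C be a cycle of length n ≥ 3 and let B be a set of vertices of C (the blue vertices) with B ≠ V(C). Then C is dangerous with respect to B if and only if either n ≡ 1 (mod 3) and |B| = n − 1, or n ≡ 2 (mod 3) and |B| = n − 2. -/
/-- A cycle of length `n` with blue vertex set `B` is *forbidden* if either all
of its vertices are blue and `n` is not a multiple of `3`, or all but precisely
one of its vertices are blue and `n ≡ 2 (mod 3)`. -/
def ForbiddenCycle (n : ℕ) (B : Finset (Fin n)) : Prop :=
  (B = Finset.univ ∧ ¬ (3 ∣ n)) ∨ (B.card = n - 1 ∧ n % 3 = 2)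

/-- A cycle of length `n` with blue vertex set `B` is *dangerous* if it is not
forbidden, it has at least one non-blue vertex, and changing the color of any
non-blue vertex to blue yields a forbidden cycle. -/
def DangerousCycle (n : ℕ) (B : Finset (Fin n)) : Prop :=
  ¬ ForbiddenCycle n B ∧ B ≠ Finset.univ ∧
    ∀ v ∉ B, ForbiddenCycle n (insert v B)

/-- A cycle of length `n ≥ 3`, with blue vertex set `B` not all of the cycle,
is dangerous iff either `n ≡ 1 (mod 3)` and all vertices but precisely one are
blue, or `n ≡ 2 (mod 3)` and all vertices but precisely two are blue. -/
theorem dangerousCycle_iff (n : ℕ) (hn : 3 ≤ n) (B : Finset (Fin n))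
    (hB : B ≠ Finset.univ) :
    DangerousCycle n B ↔
      (n % 3 = 1 ∧ B.card = n - 1) ∨ (n % 3 = 2 ∧ B.card = n - 2) := by
  have hcard : B.card < n := by
    have := Finset.card_lt_card (Finset.ssubset_univ_iff.mpr hB)
    simpa using this
  obtain ⟨v, hv⟩ : ∃ v, v ∉ B := by
    by_contra h
    push_neg at h
    exact hB (Finset.eq_univ_iff_forall.mpr h)
  simp only [DangerousCycle, ForbiddenCycle]
  constructor
  · rintro ⟨hnf, -, hins⟩
    rcases hins v hv with ⟨huniv, h3⟩ | ⟨hc, h3⟩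
    · have hcn : B.card + 1 = n := by
        have := congrArg Finset.card huniv
        simpa [Finset.card_insert_of_notMem hv] using this
      have h3' : n % 3 = 1 ∨ n % 3 = 2 := by omega
      rcases h3' with h | h
      · exact Or.inl ⟨h, by omega⟩
      · exact absurd (Or.inr ⟨by omega, h⟩) hnf
    · have : B.card + 1 = n - 1 := by
        simpa [Finset.card_insert_of_notMem hv] using hc
      exact Or.inr ⟨h3, by omega⟩
  · rintro (⟨h3, hc⟩ | ⟨h3, hc⟩)
    · refine ⟨?_, hB, ?_⟩
      · rintro (⟨h, -⟩ | ⟨-, h⟩)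
        · exact hB h
        · omega
      · intro w hw
        left
        refine ⟨Finset.eq_univ_of_card _ ?_, by omega⟩
        rw [Finset.card_insert_of_notMem hw, hc, Fintype.card_fin]
        omega
    · refine ⟨?_, hB, ?_⟩
      · rintro (⟨h, -⟩ | ⟨h, -⟩)
        · exact hB h
        · omega
      · intro w hw
        right
        refine ⟨?_, h3⟩
        rw [Finset.card_insert_of_notMem hw, hc]
        omega
end

section
/- Let G be a cubic graph containing two edges x₁x₂ and y₁y₂ (with x₁, x₂, y₁, y₂ distinct) such that G − x₁x₂ − y₁y₂ has exactly two connected components: G₁ containing x₁ and y₁, and G₂ containing x₂ and y₂. Assume x₁y₁ is not an edge of G and x₂y₂ is not an edge of G. If the squares (G₁ + x₁y₁)² and (G₂ + x₂y₂)² are both 7-colorable, then G² is 7-colorable. -/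
/-- The graph `H + ab` obtained from `H` by adding the edge `a b`. -/
def addEdge {α : Type*} (H : SimpleGraph α) (a b : α) : SimpleGraph α :=
  H ⊔ SimpleGraph.fromEdgeSet {s(a, b)}

/-!
Colour `G₁` by a colouring of `(G₁ + x₁y₁)²` and `G₂` by a colouring of `(G₂ + x₂y₂)²` followed
by a permutation `σ` of the colours. Two vertices of one side at distance at most 2 in `G` are
already at distance at most 2 within that side, because a vertex of the other side has only one
neighbour on this side (`x₂ ≠ y₂`). A pair crossing the cut consists of `x₂` and a vertex of the
closed neighbourhood of `x₁` on its side, or the same with `y`, or with the roles of the sides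
exchanged; in a cubic graph such a closed neighbourhood has at most three vertices on the side of
its centre. So `σ` must send the colours of `x₂, y₂` off three colours each and pull the colours of
`x₁, y₁` back off three colours each. The added edges make the colours of `x₁, y₁` distinct, and
those of `x₂, y₂`, so a greedy choice of `σ` succeeds with `3 + 4 = 7` colours.
-/

open Function Set SimpleGraph
open scoped Set.Notation

theorem Set.exists_notMem_of_encard_lt_card {α : Type*} {s : Set α}
    (h : s.encard < ENat.card α) : ∃ x, x ∉ s := by
  by_contra! hs
  rw [eq_univ_of_forall hs, encard_univ] at h
  exact h.false

theorem Equiv.Perm.exists_avoiding_of_encard_le {α : Type*} {k : ℕ} (hα : k + 4 ≤ ENat.card α)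
    {a b a' b' : α} (hab : a ≠ b) (hab' : a' ≠ b') {A B A' B' : Set α}
    (hA : A.encard ≤ k) (hB : B.encard ≤ k) (hA' : A'.encard ≤ k) (hB' : B'.encard ≤ k) :
    ∃ σ : Perm α, σ a' ∉ A ∧ σ b' ∉ B ∧ a ∉ σ '' A' ∧ b ∉ σ '' B' := by
  have avoid (s : Set α) (hs : s.encard < k + 4) : ∃ x, x ∉ s :=
    exists_notMem_of_encard_lt_card (hs.trans_le hα)
  obtain ⟨p, hp⟩ := avoid (insert a (insert b A)) <| by
    grw [encard_insert_le, encard_insert_le, hA]; norm_cast; omega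
  obtain ⟨q, hq⟩ := avoid (insert p (insert a (insert b B))) <| by
    grw [encard_insert_le, encard_insert_le, encard_insert_le, hB]; norm_cast; omega
  obtain ⟨s, hs⟩ := avoid (insert a' (insert b' A')) <| by
    grw [encard_insert_le, encard_insert_le, hA']; norm_cast; omega
  obtain ⟨t, ht⟩ := avoid (insert s (insert a' (insert b' B'))) <| by
    grw [encard_insert_le, encard_insert_le, encard_insert_le, hB']; norm_cast; omega
  simp only [mem_insert_iff, not_or] at hp hq hs ht
  have inj₁ : Injective ![a', b', s, t] := by
    intro i j; fin_cases i <;> fin_cases j <;> simp_all [eq_comm]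
  have inj₂ : Injective ![p, q, a, b] := by
    intro i j; fin_cases i <;> fin_cases j <;> simp_all [eq_comm]
  obtain ⟨σ, hσ⟩ := Perm.exists_extending_pair _ _ inj₁ inj₂
  refine ⟨σ, (hσ 0).symm ▸ hp.2.2, (hσ 1).symm ▸ hq.2.2.2, ?_, ?_⟩
  · rintro ⟨c, hc, hca⟩
    exact hs.2.2 ((show c = s from σ.injective (hca.trans (hσ 2).symm)) ▸ hc)
  · rintro ⟨c, hc, hcb⟩
    exact ht.2.2.2 ((show c = t from σ.injective (hcb.trans (hσ 3).symm)) ▸ hc)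

theorem graphSquare_mono {V : Type*} {G H : SimpleGraph V} (h : G ≤ H) :
    graphSquare G ≤ graphSquare H := by
  rintro u v ⟨hne, huv | ⟨w, huw, hwv⟩⟩
  · exact ⟨hne, .inl (h huv)⟩
  · exact ⟨hne, .inr ⟨w, h huw, h hwv⟩⟩

theorem addEdge_adj_self {α : Type*} (H : SimpleGraph α) {a b : α} (hab : a ≠ b) :
    (addEdge H a b).Adj a b := by
  simp [addEdge, hab]

theorem induce_graphSquare_le_of_subsingleton {V : Type*} {G : SimpleGraph V} {S : Set V}
    (hS : ∀ w ∉ S, (G.neighborSet w ∩ S).Subsingleton) :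
    (graphSquare G).induce S ≤ graphSquare (G.induce S) := by
  rintro ⟨u, hu⟩ ⟨v, hv⟩ ⟨hne, huv | ⟨w, huw, hwv⟩⟩
  · exact ⟨by simpa using hne, .inl huv⟩
  by_cases hw : w ∈ S
  · exact ⟨by simpa using hne, .inr ⟨⟨w, hw⟩, huw, hwv⟩⟩
  · exact absurd (hS w hw ⟨huw.symm, hu⟩ ⟨hwv, hv⟩) hne

namespace SimpleGraph

variable {V : Type*} {G : SimpleGraph V}

def closedNeighborSet (G : SimpleGraph V) (x : V) : Set V := insert x (G.neighborSet x)

theorem encard_preimage_closedNeighborSet_le {S : Set V} {x y : V} (hxy : G.Adj x y)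
    (hy : y ∉ S) : (S ↓∩ G.closedNeighborSet x).encard ≤ (G.neighborSet x).encard := by
  have hsub : S ↓∩ G.closedNeighborSet x ⊆ S ↓∩ insert x (G.neighborSet x \ {y}) := by
    rintro ⟨u, hu⟩ (rfl | hxu)
    · exact mem_insert _ _
    · exact .inr ⟨hxu, by rintro rfl; exact hy hu⟩
  calc (S ↓∩ G.closedNeighborSet x).encard
      ≤ (insert x (G.neighborSet x \ {y})).encard :=
        (encard_mono hsub).trans (encard_preimage_val_le_encard_right _ _)
    _ ≤ (G.neighborSet x \ {y}).encard + 1 := encard_insert_le _ _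
    _ = (G.neighborSet x).encard := encard_sdiff_singleton_add_one hxy

theorem induce_le_induce_deleteEdges {S : Set V} {E : Set (Sym2 V)}
    (hE : ∀ e ∈ E, ∃ v ∈ e, v ∉ S) : G.induce S ≤ (G.deleteEdges E).induce S := by
  rintro ⟨u, hu⟩ ⟨v, hv⟩ huv
  refine deleteEdges_adj.mpr ⟨huv, fun he => ?_⟩
  obtain ⟨w, hw, hwS⟩ := hE _ he
  rcases Sym2.mem_iff.mp hw with rfl | rfl <;> contradiction

theorem nonempty_coloring_of_isCompl {α : Type*} {K : SimpleGraph V} {S T : Set V}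
    (hST : IsCompl S T) (f₁ : (K.induce S).Coloring α) (f₂ : (K.induce T).Coloring α)
    (hcross : ∀ u (hu : u ∈ S) v (hv : v ∈ T), K.Adj u v → f₁ ⟨u, hu⟩ ≠ f₂ ⟨v, hv⟩) :
    Nonempty (K.Coloring α) := by
  classical
  have hT {v : V} (hv : v ∉ S) : v ∈ T := hST.compl_eq ▸ hv
  let F (u : V) : α := if hu : u ∈ S then f₁ ⟨u, hu⟩ else f₂ ⟨u, hT hu⟩
  refine ⟨Coloring.mk F fun {u v} huv => ?_⟩
  by_cases hu : u ∈ S <;> by_cases hv : v ∈ S <;> simp only [F, hu, hv, dite_true, dite_false]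
  · exact f₁.valid huv
  · exact hcross u hu v (hT hv) huv
  · exact (hcross v hv u (hT hu) huv.symm).symm
  · exact f₂.valid huv

def IsTwoEdgeCut (G : SimpleGraph V) (S : Set V) (x₁ x₂ y₁ y₂ : V) : Prop :=
  ∀ u ∈ S, ∀ v ∉ S, G.Adj u v → u = x₁ ∧ v = x₂ ∨ u = y₁ ∧ v = y₂

theorem isTwoEdgeCut_setOf_reachable_deleteEdges {x₁ x₂ y₁ y₂ z : V}
    (hx₂ : ¬ (G.deleteEdges {s(x₁, x₂), s(y₁, y₂)}).Reachable x₂ z)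
    (hy₂ : ¬ (G.deleteEdges {s(x₁, x₂), s(y₁, y₂)}).Reachable y₂ z) :
    IsTwoEdgeCut G {u | (G.deleteEdges {s(x₁, x₂), s(y₁, y₂)}).Reachable u z} x₁ x₂ y₁ y₂ := by
  intro u hu v hv huv
  have he : s(u, v) ∈ ({s(x₁, x₂), s(y₁, y₂)} : Set (Sym2 V)) := by
    by_contra he
    exact hv ((deleteEdges_adj.mpr ⟨huv, he⟩).symm.reachable.trans hu)
  rcases he with he | he <;> rcases Sym2.eq_iff.mp he with ⟨rfl, rfl⟩ | ⟨rfl, rfl⟩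
  exacts [.inl ⟨rfl, rfl⟩, absurd hu hx₂, .inr ⟨rfl, rfl⟩, absurd hu hy₂]

namespace IsTwoEdgeCut

variable {S : Set V} {x₁ x₂ y₁ y₂ : V} (h : IsTwoEdgeCut G S x₁ x₂ y₁ y₂)
include h

theorem compl : IsTwoEdgeCut G Sᶜ x₂ x₁ y₂ y₁ := by
  intro u hu v hv huv
  rw [mem_compl_iff, not_not] at hv
  rcases h v hv u hu huv.symm with ⟨rfl, rfl⟩ | ⟨rfl, rfl⟩
  exacts [.inl ⟨rfl, rfl⟩, .inr ⟨rfl, rfl⟩]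

theorem induce_graphSquare_le (h₂ : x₂ ≠ y₂) :
    (graphSquare G).induce S ≤ graphSquare (G.induce S) := by
  refine induce_graphSquare_le_of_subsingleton fun w hw u ⟨hwu, hu⟩ v ⟨hwv, hv⟩ => ?_
  rcases h u hu w hw hwu.symm with ⟨rfl, rfl⟩ | ⟨rfl, rfl⟩ <;>
    rcases h v hv w hw hwv.symm with ⟨rfl, hw'⟩ | ⟨rfl, hw'⟩
  exacts [rfl, absurd hw' h₂, absurd hw'.symm h₂, rfl]

theorem graphSquare_adj {u v : V} (hu : u ∈ S) (hv : v ∉ S) (huv : (graphSquare G).Adj u v) :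
    u ∈ G.closedNeighborSet x₁ ∧ v = x₂ ∨ u ∈ G.closedNeighborSet y₁ ∧ v = y₂ ∨
      u = x₁ ∧ v ∈ G.closedNeighborSet x₂ ∨ u = y₁ ∧ v ∈ G.closedNeighborSet y₂ := by
  obtain ⟨-, huv | ⟨w, huw, hwv⟩⟩ := huv
  · rcases h u hu v hv huv with ⟨rfl, rfl⟩ | ⟨rfl, rfl⟩
    exacts [.inl ⟨mem_insert _ _, rfl⟩, .inr (.inl ⟨mem_insert _ _, rfl⟩)]
  by_cases hw : w ∈ S
  · rcases h w hw v hv hwv with ⟨rfl, rfl⟩ | ⟨rfl, rfl⟩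
    exacts [.inl ⟨.inr huw.symm, rfl⟩, .inr (.inl ⟨.inr huw.symm, rfl⟩)]
  · rcases h u hu w hw huw with ⟨rfl, rfl⟩ | ⟨rfl, rfl⟩
    exacts [.inr (.inr (.inl ⟨rfl, .inr hwv⟩)), .inr (.inr (.inr ⟨rfl, .inr hwv⟩))]

theorem ne_of_graphSquare_adj {α : Type*} {T : Set V} (hST : IsCompl S T) {f₁ : S → α}
    {f₂ : T → α} (hx₁ : x₁ ∈ S) (hy₁ : y₁ ∈ S) (hx₂ : x₂ ∈ T) (hy₂ : y₂ ∈ T)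
    (hfx₂ : f₂ ⟨x₂, hx₂⟩ ∉ f₁ '' (S ↓∩ G.closedNeighborSet x₁))
    (hfy₂ : f₂ ⟨y₂, hy₂⟩ ∉ f₁ '' (S ↓∩ G.closedNeighborSet y₁))
    (hfx₁ : f₁ ⟨x₁, hx₁⟩ ∉ f₂ '' (T ↓∩ G.closedNeighborSet x₂))
    (hfy₁ : f₁ ⟨y₁, hy₁⟩ ∉ f₂ '' (T ↓∩ G.closedNeighborSet y₂))
    {u v : V} (hu : u ∈ S) (hv : v ∈ T) (huv : (graphSquare G).Adj u v) :
    f₁ ⟨u, hu⟩ ≠ f₂ ⟨v, hv⟩ := by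
  rcases h.graphSquare_adj hu (Set.disjoint_right.mp hST.disjoint hv) huv with
    ⟨hu', rfl⟩ | ⟨hu', rfl⟩ | ⟨rfl, hv'⟩ | ⟨rfl, hv'⟩
  · exact fun he => hfx₂ ⟨⟨u, hu⟩, hu', he⟩
  · exact fun he => hfy₂ ⟨⟨u, hu⟩, hu', he⟩
  · exact fun he => hfx₁ ⟨⟨v, hv⟩, hv', he.symm⟩
  · exact fun he => hfy₁ ⟨⟨v, hv⟩, hv', he.symm⟩

theorem nonempty_coloring_graphSquare {α : Type*} {k : ℕ} {T : Set V} (hST : IsCompl S T)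
    (hx₁ : x₁ ∈ S) (hy₁ : y₁ ∈ S) (hx₂ : x₂ ∈ T) (hy₂ : y₂ ∈ T)
    (hx : G.Adj x₁ x₂) (hy : G.Adj y₁ y₂) (hdeg : ∀ v, (G.neighborSet v).encard ≤ k)
    (hα : k + 4 ≤ ENat.card α) {H₁ : SimpleGraph S} {H₂ : SimpleGraph T}
    (hH₁ : G.induce S ≤ H₁) (hH₂ : G.induce T ≤ H₂)
    (hxy₁ : H₁.Adj ⟨x₁, hx₁⟩ ⟨y₁, hy₁⟩) (hxy₂ : H₂.Adj ⟨x₂, hx₂⟩ ⟨y₂, hy₂⟩)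
    (c₁ : (graphSquare H₁).Coloring α) (c₂ : (graphSquare H₂).Coloring α) :
    Nonempty ((graphSquare G).Coloring α) := by
  have hT : IsTwoEdgeCut G T x₂ x₁ y₂ y₁ := hST.compl_eq ▸ h.compl
  have bound₁ {x y : V} (hxy : G.Adj x y) (hy : y ∈ T) :
      (c₁ '' (S ↓∩ G.closedNeighborSet x)).encard ≤ k :=
    (encard_image_le _ _).trans <| (encard_preimage_closedNeighborSet_le hxy
      (Set.disjoint_right.mp hST.disjoint hy)).trans (hdeg x)
  have bound₂ {x y : V} (hxy : G.Adj x y) (hy : y ∈ S) :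
      (c₂ '' (T ↓∩ G.closedNeighborSet x)).encard ≤ k :=
    (encard_image_le _ _).trans <| (encard_preimage_closedNeighborSet_le hxy
      (Set.disjoint_left.mp hST.disjoint hy)).trans (hdeg x)
  obtain ⟨σ, hσx₂, hσy₂, hσx₁, hσy₁⟩ := Equiv.Perm.exists_avoiding_of_encard_le hα
    (c₁.valid ⟨hxy₁.ne, .inl hxy₁⟩) (c₂.valid ⟨hxy₂.ne, .inl hxy₂⟩)
    (bound₁ hx hx₂) (bound₁ hy hy₂) (bound₂ hx.symm hx₁) (bound₂ hy.symm hy₁)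
  let f₁ : ((graphSquare G).induce S).Coloring α := c₁.comp <| .ofLE <|
    (h.induce_graphSquare_le (by simpa using hxy₂.ne)).trans (graphSquare_mono hH₁)
  let f₂ : ((graphSquare G).induce T).Coloring α :=
    (Embedding.completeGraph σ.toEmbedding).toHom.comp <| c₂.comp <| .ofLE <|
      (hT.induce_graphSquare_le (by simpa using hxy₁.ne)).trans (graphSquare_mono hH₂)
  refine nonempty_coloring_of_isCompl hST f₁ f₂ fun u hu v hv huv => ?_
  refine h.ne_of_graphSquare_adj hST hx₁ hy₁ hx₂ hy₂ hσx₂ hσy₂ ?_ ?_ hu hv huv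
  all_goals rwa [show ⇑f₂ = σ ∘ c₂ from rfl, image_comp]

end IsTwoEdgeCut

end SimpleGraph

theorem colorable_square_of_two_edge_cut_general
    {V : Type*} (G : SimpleGraph V)
    (hcubic : ∀ u : V, {w | G.Adj u w}.ncard = 3)
    (x₁ x₂ y₁ y₂ : V)
    (hdistinct : ([x₁, x₂, y₁, y₂] : List V).Pairwise (· ≠ ·))
    (hx : G.Adj x₁ x₂) (hy : G.Adj y₁ y₂)
    (G' : SimpleGraph V) (hG' : G' = G.deleteEdges {s(x₁, x₂), s(y₁, y₂)})
    (hsep : ¬ G'.Reachable x₁ x₂)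
    (hall : ∀ u : V, G'.Reachable u x₁ ∨ G'.Reachable u x₂)
    (hy1 : G'.Reachable y₁ x₁) (hy2 : G'.Reachable y₂ x₂)
    (h1 : (graphSquare (addEdge (G'.induce {u | G'.Reachable u x₁})
        ⟨x₁, SimpleGraph.Reachable.refl x₁⟩ ⟨y₁, hy1⟩)).Colorable 7)
    (h2 : (graphSquare (addEdge (G'.induce {u | G'.Reachable u x₂})
        ⟨x₂, SimpleGraph.Reachable.refl x₂⟩ ⟨y₂, hy2⟩)).Colorable 7) :
    (graphSquare G).Colorable 7 := by
  have hxy : x₁ ≠ y₁ ∧ x₂ ≠ y₂ := by grind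
  have hx₂ : ¬ G'.Reachable x₂ x₁ := fun h => hsep h.symm
  have hy₂ : ¬ G'.Reachable y₂ x₁ := fun h => hsep (h.symm.trans hy2)
  have hy₁ : ¬ G'.Reachable y₁ x₂ := fun h => hsep (hy1.symm.trans h)
  have hST : IsCompl {u | G'.Reachable u x₁} {u | G'.Reachable u x₂} :=
    ⟨Set.disjoint_left.mpr fun u hu₁ hu₂ => hsep (hu₁.symm.trans hu₂),
      codisjoint_iff.mpr (eq_univ_of_forall hall)⟩
  have hdeg (v : V) : (G.neighborSet v).encard ≤ 3 := by
    have h3 : (G.neighborSet v).ncard = 3 := hcubic v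
    rw [← (finite_of_ncard_ne_zero (by omega)).cast_ncard_eq, h3]; rfl
  obtain ⟨c₁⟩ := h1
  obtain ⟨c₂⟩ := h2
  have hcut : IsTwoEdgeCut G {u | G'.Reachable u x₁} x₁ x₂ y₁ y₂ := by
    subst hG'
    exact isTwoEdgeCut_setOf_reachable_deleteEdges hx₂ hy₂
  have hle₁ : G.induce {u | G'.Reachable u x₁} ≤ G'.induce {u | G'.Reachable u x₁} := by
    subst hG'
    exact induce_le_induce_deleteEdges (by simp [hx₂, hy₂])
  have hle₂ : G.induce {u | G'.Reachable u x₂} ≤ G'.induce {u | G'.Reachable u x₂} := by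
    subst hG'
    exact induce_le_induce_deleteEdges (by simp [hsep, hy₁])
  exact hcut.nonempty_coloring_graphSquare hST .rfl hy1 .rfl hy2 hx hy hdeg (by norm_num)
    (hle₁.trans le_sup_left) (hle₂.trans le_sup_left)
    (addEdge_adj_self _ (by simpa using hxy.1)) (addEdge_adj_self _ (by simpa using hxy.2)) c₁ c₂

/-- Let `G` be a cubic graph with two edges `x₁x₂`, `y₁y₂` whose deletion
leaves exactly two components `G₁ ∋ x₁, y₁` and `G₂ ∋ x₂, y₂`, where `x₁y₁`
and `x₂y₂` are not edges of `G`. If `(G₁ + x₁y₁)²` and `(G₂ + x₂y₂)²` are both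
`7`-colorable, then `G²` is `7`-colorable. -/
theorem colorable_square_of_two_edge_cut
    {V : Type*} [Fintype V] (G : SimpleGraph V)
    (hcubic : ∀ u : V, {w | G.Adj u w}.ncard = 3)
    (x₁ x₂ y₁ y₂ : V)
    (hdistinct : ([x₁, x₂, y₁, y₂] : List V).Pairwise (· ≠ ·))
    (hx : G.Adj x₁ x₂) (hy : G.Adj y₁ y₂)
    (hx1y1 : ¬ G.Adj x₁ y₁) (hx2y2 : ¬ G.Adj x₂ y₂)
    (G' : SimpleGraph V) (hG' : G' = G.deleteEdges {s(x₁, x₂), s(y₁, y₂)})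
    (hsep : ¬ G'.Reachable x₁ x₂)
    (hall : ∀ u : V, G'.Reachable u x₁ ∨ G'.Reachable u x₂)
    (hy1 : G'.Reachable y₁ x₁) (hy2 : G'.Reachable y₂ x₂)
    (h1 : (graphSquare (addEdge (G'.induce {u | G'.Reachable u x₁})
        ⟨x₁, SimpleGraph.Reachable.refl x₁⟩ ⟨y₁, hy1⟩)).Colorable 7)
    (h2 : (graphSquare (addEdge (G'.induce {u | G'.Reachable u x₂})
        ⟨x₂, SimpleGraph.Reachable.refl x₂⟩ ⟨y₂, hy2⟩)).Colorable 7) :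
    (graphSquare G).Colorable 7 :=
  colorable_square_of_two_edge_cut_general G hcubic x₁ x₂ y₁ y₂ hdistinct hx hy G' hG' hsep hall hy1
    hy2 h1 h2
end
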